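/- If the independence polynomial of a graph G of order n is I(G;x) = \sum_k s_k x^k, then the independence polynomial of the corona G \circ 2K_1 equals \sum_k s_k x^k (1+x)^{2(n-k)}, which is a symmetric polynomial of degree 2n. -/
import Mathlib


open Polynomial

open scoped Classical in
/-- The independence polynomial of a finite simple graph. -/
noncomputable def indepPoly {V : Type} [Fintype V] (G : SimpleGraph V) : Polynomial ℝ :=
  ∑ s ∈ Finset.univ.filter (fun s : Finset V => ∀ u ∈ s, ∀ v ∈ s, ¬ G.Adj u v),
    (X : Polynomial ℝ) ^ s.card

/-- The corona `G ∘ 2K₁`: attach two private pendant vertices (not adjacent to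
each other) to each vertex of `G`. -/
def corona2K1 {V : Type} (G : SimpleGraph V) : SimpleGraph (V ⊕ V × Bool) :=
  SimpleGraph.fromRel (fun x y =>
    match x, y with
    | Sum.inl a, Sum.inl b => G.Adj a b
    | Sum.inl a, Sum.inr p => a = p.1
    | _, _ => False)

lemma corona_indep_iff {V : Type} (G : SimpleGraph V) (A : Finset (V ⊕ V × Bool)) :
    (∀ u ∈ A, ∀ v ∈ A, ¬ (corona2K1 G).Adj u v) ↔
      ((∀ u ∈ A.toLeft, ∀ v ∈ A.toLeft, ¬ G.Adj u v) ∧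
        ∀ p ∈ A.toRight, p.1 ∉ A.toLeft) := by
  constructor
  · intro h
    refine ⟨fun u hu v hv hadj => ?_, fun p hp hmem => ?_⟩
    · exact h _ (Finset.mem_toLeft.mp hu) _ (Finset.mem_toLeft.mp hv)
        (by simp [corona2K1, SimpleGraph.fromRel_adj, hadj, hadj.ne])
    · exact h _ (Finset.mem_toLeft.mp hmem) _ (Finset.mem_toRight.mp hp)
        (by simp [corona2K1, SimpleGraph.fromRel_adj])
  · rintro ⟨h1, h2⟩ u hu v hv hadj
    rw [corona2K1, SimpleGraph.fromRel_adj] at hadj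
    obtain ⟨hne, hr⟩ := hadj
    rcases u with a | p <;> rcases v with b | q
    · rcases hr with hr | hr
      · exact h1 a (Finset.mem_toLeft.mpr hu) b (Finset.mem_toLeft.mpr hv) hr
      · exact h1 b (Finset.mem_toLeft.mpr hv) a (Finset.mem_toLeft.mpr hu) hr
    · simp only at hr
      rcases hr with hr | hr
      · exact h2 q (Finset.mem_toRight.mpr hv) (hr ▸ Finset.mem_toLeft.mpr hu)
      · exact hr
    · simp only at hr
      rcases hr with hr | hr
      · exact hr
      · exact h2 p (Finset.mem_toRight.mpr hu) (hr ▸ Finset.mem_toLeft.mpr hv)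
    · simp only at hr
      rcases hr with hr | hr <;> exact hr

lemma sum_powerset_pow_card {α : Type*} [DecidableEq α] (U : Finset α) :
    ∑ T ∈ U.powerset, (X : Polynomial ℝ) ^ T.card = (1 + X) ^ U.card := by
  rw [add_comm (1 : Polynomial ℝ) X, ← Finset.prod_const, Finset.prod_add]
  exact Finset.sum_congr rfl fun t ht => by simp [Finset.prod_const]

lemma natDegree_one_add_X_pow_le (m : ℕ) :
    ((1 + X : Polynomial ℝ) ^ m).natDegree ≤ m := by
  refine natDegree_pow_le.trans ?_
  have h : (1 + X : Polynomial ℝ).natDegree ≤ 1 :=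
    (natDegree_add_le _ _).trans (by simp)
  calc m * (1 + X : Polynomial ℝ).natDegree ≤ m * 1 := Nat.mul_le_mul_left _ h
    _ = m := mul_one m

lemma aux_corona_sum {α β : Type*}
    (F : Finset (Finset α)) (𝒜 : Finset (Finset (α ⊕ β)))
    (U : Finset α → Finset β)
    (h : ∀ C : Finset (α ⊕ β), C ∈ 𝒜 ↔ C.toLeft ∈ F ∧ C.toRight ⊆ U C.toLeft) :
    ∑ C ∈ 𝒜, (X : Polynomial ℝ) ^ C.card =
      ∑ s ∈ F, (X : Polynomial ℝ) ^ s.card * (1 + X) ^ (U s).card := by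
  classical
  have hterm : ∀ s ∈ F,
      (X : Polynomial ℝ) ^ s.card * (1 + X) ^ (U s).card =
        ∑ T ∈ (U s).powerset, (X : Polynomial ℝ) ^ (s.card + T.card) := by
    intro s _
    rw [← sum_powerset_pow_card, Finset.mul_sum]
    exact Finset.sum_congr rfl fun T _ => (pow_add _ _ _).symm
  rw [Finset.sum_congr rfl hterm, Finset.sum_sigma']
  refine Finset.sum_nbij' (fun C => (⟨C.toLeft, C.toRight⟩ : Σ _ : Finset α, Finset β))
    (fun p => p.1.disjSum p.2) ?_ ?_ ?_ ?_ ?_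
  · intro C hC
    obtain ⟨h1, h2⟩ := (h C).mp hC
    rw [Finset.mem_sigma, Finset.mem_powerset]
    exact ⟨h1, h2⟩
  · intro p hp
    rw [Finset.mem_sigma, Finset.mem_powerset] at hp
    refine (h _).mpr ⟨?_, ?_⟩
    · rw [Finset.toLeft_disjSum]; exact hp.1
    · rw [Finset.toLeft_disjSum, Finset.toRight_disjSum]; exact hp.2
  · intro C _
    exact Finset.toLeft_disjSum_toRight
  · intro p _
    ext1 <;> simp
  · intro C _
    rw [← Finset.card_toLeft_add_card_toRight]

set_option maxHeartbeats 1000000 in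
open scoped Classical in
lemma corona_indepPoly {V : Type} [Fintype V] (G : SimpleGraph V) :
    indepPoly (corona2K1 G) =
      ∑ s ∈ Finset.univ.filter (fun s : Finset V => ∀ u ∈ s, ∀ v ∈ s, ¬ G.Adj u v),
        (X : Polynomial ℝ) ^ s.card * (1 + X) ^ (2 * (Fintype.card V - s.card)) := by
  rw [indepPoly]
  refine (aux_corona_sum
      (Finset.univ.filter (fun s : Finset V => ∀ u ∈ s, ∀ v ∈ s, ¬ G.Adj u v)) _
      (fun s : Finset V => sᶜ ×ˢ (Finset.univ : Finset Bool)) ?_).trans ?_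
  · intro C
    simp only [Finset.mem_filter, Finset.mem_univ, true_and]
    rw [corona_indep_iff]
    refine and_congr_right fun _ => ?_
    constructor
    · intro h2 p hp
      rw [Finset.mem_product]
      exact ⟨Finset.mem_compl.mpr (h2 p hp), Finset.mem_univ _⟩
    · intro h2 p hp hmem
      have := h2 hp
      rw [Finset.mem_product] at this
      exact Finset.mem_compl.mp this.1 hmem
  · refine Finset.sum_congr rfl fun s _ => ?_
    congr 1
    congr 1
    rw [Finset.card_product, Finset.card_compl, Finset.card_univ, Fintype.card_bool]
    ring

lemma reflect_one_add_X_pow (m : ℕ) :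
    reflect m ((1 + X : Polynomial ℝ) ^ m) = (1 + X) ^ m := by
  induction m with
  | zero => simp [reflect_one]
  | succ m ih =>
    have h1 : ((1 + X : Polynomial ℝ) ^ m).natDegree ≤ m := natDegree_one_add_X_pow_le m
    have h2 : (1 + X : Polynomial ℝ).natDegree ≤ 1 :=
      (natDegree_add_le _ _).trans (by simp)
    have h := reflect_mul ((1 + X : Polynomial ℝ) ^ m) (1 + X) h1 h2
    rw [pow_succ, h, ih]
    congr 1
    rw [reflect_add, reflect_one, pow_one, reflect_one_X, add_comm]

lemma reflect_term (c : ℝ) (n k : ℕ) (hk : k ≤ n) :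
    reflect (2 * n) (C c * X ^ k * (1 + X : Polynomial ℝ) ^ (2 * (n - k))) =
      C c * X ^ k * (1 + X) ^ (2 * (n - k)) := by
  have hsplit : 2 * n = 2 * k + 2 * (n - k) := by omega
  have h1 : (C c * X ^ k : Polynomial ℝ).natDegree ≤ 2 * k := by
    refine (natDegree_mul_le).trans ?_
    simp [natDegree_X_pow]
    omega
  have h2 : ((1 + X : Polynomial ℝ) ^ (2 * (n - k))).natDegree ≤ 2 * (n - k) :=
    natDegree_one_add_X_pow_le _
  rw [hsplit, reflect_mul (C c * X ^ k) _ h1 h2, reflect_one_add_X_pow,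
    reflect_C_mul, reflect_monomial]
  congr 3
  rw [revAt_le (by omega)]
  omega

open scoped Classical in
lemma coeff_indepPoly_zero {V : Type} [Fintype V] (G : SimpleGraph V) :
    (indepPoly G).coeff 0 = 1 := by
  rw [indepPoly, finset_sum_coeff]
  rw [Finset.sum_eq_single_of_mem (∅ : Finset V)]
  · simp
  · simp
  · intro s _ hne
    rw [coeff_X_pow]
    have : s.card ≠ 0 := fun h => hne (Finset.card_eq_zero.mp h)
    simp [Ne.symm this]

theorem stmt_19 {V : Type} [Fintype V] (G : SimpleGraph V) (n : ℕ)
    (hn : n = Fintype.card V) :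
    indepPoly (corona2K1 G) =
      (∑ k ∈ Finset.range (n + 1),
        C ((indepPoly G).coeff k) * X ^ k * (1 + X) ^ (2 * (n - k))) ∧
    (∀ k ≤ 2 * n,
      (indepPoly (corona2K1 G)).coeff k =
        (indepPoly (corona2K1 G)).coeff (2 * n - k)) ∧
    (indepPoly (corona2K1 G)).natDegree = 2 * n := by
  classical
  subst hn
  set n := Fintype.card V with hn
  set F := Finset.univ.filter (fun s : Finset V => ∀ u ∈ s, ∀ v ∈ s, ¬ G.Adj u v) with hF
  -- coefficient of indepPoly G
  have hcoeff : ∀ k : ℕ, (indepPoly G).coeff k =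
      ((F.filter (fun s => s.card = k)).card : ℝ) := by
    intro k
    rw [indepPoly, finset_sum_coeff, ← hF, Finset.card_filter, Nat.cast_sum]
    refine Finset.sum_congr rfl fun s _ => ?_
    rw [coeff_X_pow]
    by_cases h : s.card = k
    · subst h; simp
    · simp [h, Ne.symm h]
  -- main formula
  have hmain : indepPoly (corona2K1 G) =
      ∑ k ∈ Finset.range (n + 1),
        C ((indepPoly G).coeff k) * X ^ k * (1 + X) ^ (2 * (n - k)) := by
    rw [corona_indepPoly, ← hF, ← hn]
    have hmaps : ∀ s ∈ F, s.card ∈ Finset.range (n + 1) := by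
      intro s _
      rw [Finset.mem_range, hn]
      exact Nat.lt_succ_of_le (Finset.card_le_univ s)
    rw [← Finset.sum_fiberwise_of_maps_to hmaps
      (fun s => (X : Polynomial ℝ) ^ s.card * (1 + X) ^ (2 * (n - s.card)))]
    refine Finset.sum_congr rfl fun k hk => ?_
    rw [hcoeff k]
    rw [show (C (((F.filter (fun s => s.card = k)).card : ℝ)) : Polynomial ℝ) =
      ∑ s ∈ F.filter (fun s => s.card = k), (1 : Polynomial ℝ) by simp]
    rw [Finset.sum_mul, Finset.sum_mul]
    refine Finset.sum_congr rfl fun s hs => ?_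
    rw [Finset.mem_filter] at hs
    rw [hs.2, one_mul]
  refine ⟨hmain, ?_, ?_⟩
  · -- symmetry
    intro k hk
    have hterm : ∀ j ≤ n,
        (C ((indepPoly G).coeff j) * X ^ j * (1 + X : Polynomial ℝ) ^ (2 * (n - j))).coeff k =
        (C ((indepPoly G).coeff j) * X ^ j * (1 + X : Polynomial ℝ) ^ (2 * (n - j))).coeff
          (2 * n - k) := by
      intro j hj
      conv_lhs => rw [← reflect_term ((indepPoly G).coeff j) n j hj]
      rw [coeff_reflect, revAt_le hk]
    rw [hmain, finset_sum_coeff, finset_sum_coeff]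
    exact Finset.sum_congr rfl fun j hj =>
      hterm j (Nat.lt_succ_iff.mp (Finset.mem_range.mp hj))
  · -- degree
    have hdegle : (indepPoly (corona2K1 G)).natDegree ≤ 2 * n := by
      rw [hmain]
      refine natDegree_sum_le_of_forall_le _ _ fun k hk => ?_
      have hk' : k ≤ n := Nat.lt_succ_iff.mp (Finset.mem_range.mp hk)
      refine natDegree_mul_le.trans ?_
      have h1 : (C ((indepPoly G).coeff k) * X ^ k : Polynomial ℝ).natDegree ≤ k :=
        natDegree_mul_le.trans (by simp)
      have h2 : ((1 + X : Polynomial ℝ) ^ (2 * (n - k))).natDegree ≤ 2 * (n - k) :=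
        natDegree_one_add_X_pow_le _
      omega
    have hmonic : ((1 + X : Polynomial ℝ) ^ (2 * n)).coeff (2 * n) = 1 := by
      have hm : ((X : Polynomial ℝ) + C 1).Monic := monic_X_add_C 1
      have hm2 : ((X + C 1 : Polynomial ℝ) ^ (2 * n)).Monic := hm.pow _
      have hdeg : ((X + C 1 : Polynomial ℝ) ^ (2 * n)).natDegree = 2 * n := by
        rw [natDegree_pow, natDegree_X_add_C, mul_one]
      have heq : (1 + X : Polynomial ℝ) = X + C 1 := by rw [C_1]; ring
      have h3 := hm2.coeff_natDegree
      rw [hdeg] at h3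
      rw [heq]
      exact h3
    have hcoeff2n : (indepPoly (corona2K1 G)).coeff (2 * n) = 1 := by
      rw [hmain, finset_sum_coeff]
      rw [Finset.sum_eq_single_of_mem 0 (Finset.mem_range.mpr (Nat.succ_pos n))]
      · simp only [pow_zero, mul_one, Nat.sub_zero, coeff_C_mul]
        rw [hmonic, coeff_indepPoly_zero]
        simp
      · intro k hk hne
        have hk' : k ≤ n := Nat.lt_succ_iff.mp (Finset.mem_range.mp hk)
        have hkpos : 0 < k := Nat.pos_of_ne_zero hne
        refine coeff_eq_zero_of_natDegree_lt ?_
        have h1 : (C ((indepPoly G).coeff k) * X ^ k : Polynomial ℝ).natDegree ≤ k :=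
          natDegree_mul_le.trans (by simp)
        have h2 : ((1 + X : Polynomial ℝ) ^ (2 * (n - k))).natDegree ≤ 2 * (n - k) :=
          natDegree_one_add_X_pow_le _
        have := natDegree_mul_le (p := C ((indepPoly G).coeff k) * X ^ k)
          (q := (1 + X : Polynomial ℝ) ^ (2 * (n - k)))
        omega
    exact natDegree_eq_of_le_of_coeff_ne_zero hdegle (by rw [hcoeff2n]; exact one_ne_zero)
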